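/- arXiv:2008.13406 — 4 statements merged into one kernel-verified Lean document; each statement's English description precedes it below -/
import Mathlib

section
/- Let w ≥ 2 be a word size, let r1, r2, r3, r4 ≤ w−1 be the rotation constants of the ChaCha quarter round Q, and let 1 ≤ r ≤ w−1 be a rotation amount. Suppose the rotational pair propagates through Q on input (x0,x1,x2,x3), i.e. Q(x0 ⋘ r, x1 ⋘ r, x2 ⋘ r, x3 ⋘ r) = (y0 ⋘ r, y1 ⋘ r, y2 ⋘ r, y3 ⋘ r) where (y0,y1,y2,y3) = Q(x0,x1,x2,x3). Then the intermediate values b̃0, b̃1, b̃2, b̃3 computed by Q on the rotated input (x0 ⋘ r, x1 ⋘ r, x2 ⋘ r, x3 ⋘ r) satisfy b̃i = bi ⋘ r for all i = 0, 1, 2, 3, where b0, b1, b2, b3 are the intermediate values computed by Q on (x0,x1,x2,x3). -/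
/-- The ChaCha quarter round with rotation constants `r1, r2, r3, r4`,
acting on quadruples of `w`-bit words. -/
def chachaQR {w : ℕ} (r1 r2 r3 r4 : ℕ)
    (x : BitVec w × BitVec w × BitVec w × BitVec w) :
    BitVec w × BitVec w × BitVec w × BitVec w :=
  let b0 := x.1 + x.2.1
  let b3 := (b0 ^^^ x.2.2.2).rotateLeft r1
  let b2 := b3 + x.2.2.1
  let b1 := (b2 ^^^ x.2.1).rotateLeft r2
  let y0 := b0 + b1
  let y3 := (y0 ^^^ b3).rotateLeft r3
  let y2 := y3 + b2
  let y1 := (y2 ^^^ b1).rotateLeft r4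
  (y0, y1, y2, y3)

/-!
Rotation is injective and commutes with XOR and with other rotations; modular addition does not
commute with rotation, but the argument never inverts an addition. Hence in an XOR-rotate step
`c = (a ⊕ d) ⋘ s`, if the output `c` and the operand `a` form rotational pairs, so does `d`.
Reading `Q` backwards, this recovers `b̃3` and `b̃1` from `ỹ3` and `ỹ1`, and then `b̃2` and `b̃0`
from `b̃1` and `b̃3`.
-/

namespace BitVec

variable {w : ℕ}

theorem rotateLeft_xor (x y : BitVec w) (s : ℕ) :
    (x ^^^ y).rotateLeft s = x.rotateLeft s ^^^ y.rotateLeft s := by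
  ext i hi
  simp only [getElem_rotateLeft, getElem_xor]
  split_ifs <;> rfl

theorem rotateLeft_rotateLeft (x : BitVec w) (a b : ℕ) :
    (x.rotateLeft a).rotateLeft b = x.rotateLeft (a + b) := by
  ext i hi
  have ha : a % w < w := Nat.mod_lt _ (by omega)
  have hb : b % w < w := Nat.mod_lt _ (by omega)
  have hab : (a + b) % w =
      if a % w + b % w < w then a % w + b % w else a % w + b % w - w := by
    rw [Nat.add_mod]
    split_ifs with h
    · exact Nat.mod_eq_of_lt h
    · rw [Nat.mod_eq_sub_mod (by omega), Nat.mod_eq_of_lt (by omega)]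
  simp only [getElem_rotateLeft, hab]
  split_ifs <;> first | omega | (congr 1; omega)

theorem rotateLeft_comm (x : BitVec w) (a b : ℕ) :
    (x.rotateLeft a).rotateLeft b = (x.rotateLeft b).rotateLeft a := by
  rw [rotateLeft_rotateLeft, rotateLeft_rotateLeft, Nat.add_comm]

theorem rotateLeft_self (x : BitVec w) : x.rotateLeft w = x := by
  ext i hi
  simp [getElem_rotateLeft]

theorem rotateLeft_injective (s : ℕ) : Function.Injective fun x : BitVec w => x.rotateLeft s := by
  have rotateLeft_inverse (x : BitVec w) : (x.rotateLeft s).rotateLeft (w - s % w) = x := by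
    rcases Nat.eq_zero_or_pos w with rfl | hw
    · exact Subsingleton.elim _ _
    rw [← rotateLeft_mod_eq_rotateLeft (r := s), rotateLeft_rotateLeft,
      Nat.add_sub_cancel' (Nat.mod_lt s hw).le, rotateLeft_self]
  intro x y h
  rw [← rotateLeft_inverse x, ← rotateLeft_inverse y]
  exact congrArg (·.rotateLeft (w - s % w)) h

theorem eq_rotateLeft_of_rotateLeft_xor_eq {a d d' : BitVec w} {r s : ℕ}
    (h : (a.rotateLeft r ^^^ d').rotateLeft s = ((a ^^^ d).rotateLeft s).rotateLeft r) :
    d' = d.rotateLeft r := by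
  rw [rotateLeft_comm (a ^^^ d), rotateLeft_xor a d r] at h
  exact (xor_right_inj _).1 (rotateLeft_injective s h)

end BitVec

theorem chachaQR_rotational_intermediate_general
    (w : ℕ)
    (r1 r2 r3 r4 : ℕ)
    (r : ℕ)
    (x0 x1 x2 x3 b0 b1 b2 b3 y0 y1 y2 y3 : BitVec w)
    -- intermediate values of Q on (x0,x1,x2,x3)
    (hb3 : b3 = (b0 ^^^ x3).rotateLeft r1)
    (hb1 : b1 = (b2 ^^^ x1).rotateLeft r2)
    -- outputs of Q on (x0,x1,x2,x3)
    (hy3 : y3 = (y0 ^^^ b3).rotateLeft r3)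
    (hy1 : y1 = (y2 ^^^ b1).rotateLeft r4)
    -- intermediate values of Q on the rotated input
    (bt0 bt1 bt2 bt3 : BitVec w)
    (hbt0 : bt0 = x0.rotateLeft r + x1.rotateLeft r)
    (hbt3 : bt3 = (bt0 ^^^ x3.rotateLeft r).rotateLeft r1)
    (hbt2 : bt2 = bt3 + x2.rotateLeft r)
    (hbt1 : bt1 = (bt2 ^^^ x1.rotateLeft r).rotateLeft r2)
    -- the rotational pair propagates through Q
    (hprop : chachaQR r1 r2 r3 r4
        (x0.rotateLeft r, x1.rotateLeft r, x2.rotateLeft r, x3.rotateLeft r) =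
      (y0.rotateLeft r, y1.rotateLeft r, y2.rotateLeft r, y3.rotateLeft r)) :
    bt0 = b0.rotateLeft r ∧ bt1 = b1.rotateLeft r ∧
      bt2 = b2.rotateLeft r ∧ bt3 = b3.rotateLeft r := by
  simp only [chachaQR, Prod.mk.injEq] at hprop
  rw [← hbt0, ← hbt3, ← hbt2, ← hbt1] at hprop
  obtain ⟨hyt0, hyt1, hyt2, hyt3⟩ := hprop
  rw [hyt0] at hyt1 hyt2 hyt3
  rw [hyt3] at hyt1 hyt2
  rw [hyt2] at hyt1
  have e3 : bt3 = b3.rotateLeft r :=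
    BitVec.eq_rotateLeft_of_rotateLeft_xor_eq (by rw [hyt3, hy3])
  have e1 : bt1 = b1.rotateLeft r :=
    BitVec.eq_rotateLeft_of_rotateLeft_xor_eq (by rw [hyt1, hy1])
  have e2 : bt2 = b2.rotateLeft r := BitVec.eq_rotateLeft_of_rotateLeft_xor_eq <| by
    rw [BitVec.xor_comm (x1.rotateLeft r), ← hbt1, e1, hb1, BitVec.xor_comm b2]
  have e0 : bt0 = b0.rotateLeft r := BitVec.eq_rotateLeft_of_rotateLeft_xor_eq <| by
    rw [BitVec.xor_comm (x3.rotateLeft r), ← hbt3, e3, hb3, BitVec.xor_comm b0]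
  exact ⟨e0, e1, e2, e3⟩

theorem chachaQR_rotational_intermediate
    (w : ℕ) (hw : 2 ≤ w)
    (r1 r2 r3 r4 : ℕ)
    (hr1 : r1 ≤ w - 1) (hr2 : r2 ≤ w - 1) (hr3 : r3 ≤ w - 1) (hr4 : r4 ≤ w - 1)
    (r : ℕ) (hr : 1 ≤ r) (hrw : r ≤ w - 1)
    (x0 x1 x2 x3 b0 b1 b2 b3 y0 y1 y2 y3 : BitVec w)
    -- intermediate values of Q on (x0,x1,x2,x3)
    (hb0 : b0 = x0 + x1)
    (hb3 : b3 = (b0 ^^^ x3).rotateLeft r1)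
    (hb2 : b2 = b3 + x2)
    (hb1 : b1 = (b2 ^^^ x1).rotateLeft r2)
    -- outputs of Q on (x0,x1,x2,x3)
    (hy0 : y0 = b0 + b1)
    (hy3 : y3 = (y0 ^^^ b3).rotateLeft r3)
    (hy2 : y2 = y3 + b2)
    (hy1 : y1 = (y2 ^^^ b1).rotateLeft r4)
    -- intermediate values of Q on the rotated input
    (bt0 bt1 bt2 bt3 : BitVec w)
    (hbt0 : bt0 = x0.rotateLeft r + x1.rotateLeft r)
    (hbt3 : bt3 = (bt0 ^^^ x3.rotateLeft r).rotateLeft r1)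
    (hbt2 : bt2 = bt3 + x2.rotateLeft r)
    (hbt1 : bt1 = (bt2 ^^^ x1.rotateLeft r).rotateLeft r2)
    -- the rotational pair propagates through Q
    (hprop : chachaQR r1 r2 r3 r4
        (x0.rotateLeft r, x1.rotateLeft r, x2.rotateLeft r, x3.rotateLeft r) =
      (y0.rotateLeft r, y1.rotateLeft r, y2.rotateLeft r, y3.rotateLeft r)) :
    bt0 = b0.rotateLeft r ∧ bt1 = b1.rotateLeft r ∧
      bt2 = b2.rotateLeft r ∧ bt3 = b3.rotateLeft r :=
  chachaQR_rotational_intermediate_general w r1 r2 r3 r4 r x0 x1 x2 x3 b0 b1 b2 b3 y0 y1 y2 y3 hb3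
    hb1 hy3 hy1 bt0 bt1 bt2 bt3 hbt0 hbt3 hbt2 hbt1 hprop
end

section
/- Let w ≥ 4 and let 2 ≤ r ≤ w−2. The number of triples (a, b, c) of w-bit words such that (a ⋘ r) ⊞ (b ⋘ r) ⊞ (c ⋘ r) = (a ⊞ b ⊞ c) ⋘ r equals C(2^r + 2, 2^r − 1) · C(2^(w−r) + 2, 2^(w−r) − 1), where C denotes the binomial coefficient. Equivalently, for independent uniformly distributed a, b, c, the probability of the equality is C(2^r + 2, 2^r − 1) · C(2^(w−r) + 2, 2^(w−r) − 1) / 2^(3w). -/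
instance bitvecFintype {w : ℕ} : Fintype (BitVec w) :=
  Fintype.ofEquiv (Fin (2 ^ w)) ⟨BitVec.ofFin, BitVec.toFin, fun _ => rfl, fun _ => rfl⟩

/-!
Split a word as `x = h * 2 ^ (w - r) + l` with `h < 2 ^ r` and `l < 2 ^ (w - r)`; rotating by `r`
gives `l * 2 ^ r + h`. For three addends, the high digits and the low digits are summed
separately on both sides, and the two sides agree exactly when neither digit sum carries: a
carry (at most 2) out of one half is added, after the rotation, to the digit of the other half,
and it changes that digit because both radices exceed 2. So the solutions are the pairs of a
triple of high digits with sum `< 2 ^ r` and a triple of low digits with sum `< 2 ^ (w - r)`,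
counted by stars and bars as `C(2 ^ r + 2, 3) * C(2 ^ (w - r) + 2, 3)`.
-/

open Finset

namespace Nat

theorem mul_add_div_of_lt {a b m : ℕ} (hb : b < m) : (a * m + b) / m = a := by
  rw [add_comm, Nat.add_mul_div_right _ _ (by omega), Nat.div_eq_of_lt hb, zero_add]

theorem mul_add_mod_mul_of_lt {a b n m : ℕ} (hb : b < m) :
    (a * m + b) % (n * m) = a % n * m + b := by
  rw [mul_comm n m, Nat.mod_mul, Nat.mul_add_mod_of_lt hb, mul_add_div_of_lt hb, add_comm,
    mul_comm]

theorem mul_add_eq_mul_add_iff {a b c d n : ℕ} (hb : b < n) (hd : d < n) :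
    a * n + b = c * n + d ↔ a = c ∧ b = d := by
  refine ⟨fun h => ⟨?_, ?_⟩, by rintro ⟨rfl, rfl⟩; rfl⟩
  · rw [← mul_add_div_of_lt (a := a) hb, h, mul_add_div_of_lt hd]
  · rw [← Nat.mul_add_mod_of_lt (a := a) hb, h, Nat.mul_add_mod_of_lt hd]

theorem add_mod_eq_self_iff {a b m : ℕ} (ha : a < m) (hb : b < m) :
    (a + b) % m = a ↔ b = 0 := by
  rcases lt_or_ge (a + b) m with h | h
  · rw [Nat.mod_eq_of_lt h]; omega
  · rw [Nat.mod_eq_sub_mod h, Nat.mod_eq_of_lt (by omega)]; omega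

def swapDigits (n m x : ℕ) : ℕ := x % m * n + x / m

theorem swapDigits_mul_add {n m h l : ℕ} (hl : l < m) :
    swapDigits n m (h * m + l) = l * n + h := by
  rw [swapDigits, Nat.mul_add_mod_of_lt hl, mul_add_div_of_lt hl]

/-- Both sides are two-digit numerals; comparing digits, they agree iff the carries `L / m < n`
and `H / n < m` vanish. -/
theorem mod_eq_swapDigits_mod_iff {n m H L : ℕ} (hH : H < m * n) (hL : L < n * m) :
    (L * n + H) % (n * m) = swapDigits n m ((H * m + L) % (n * m)) ↔ H < n ∧ L < m := by
  have hm : 0 < m := Nat.pos_of_ne_zero (by rintro rfl; simp at hL)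
  have hn : 0 < n := Nat.pos_of_ne_zero (by rintro rfl; simp at hH)
  have hLm : L % m < m := Nat.mod_lt L hm
  have hHn : H % n < n := Nat.mod_lt H hn
  have hcarryL : L / m < n := (Nat.div_lt_iff_lt_mul hm).2 hL
  have hcarryH : H / n < m := (Nat.div_lt_iff_lt_mul hn).2 hH
  have hlhs : (L * n + H) % (n * m) = (L % m + H / n) % m * n + H % n := by
    have h : L * n + H = (L % m + H / n) * n + H % n + L / m * (m * n) := by
      conv_lhs => rw [← Nat.div_add_mod L m, ← Nat.div_add_mod H n]
      ring
    rw [mul_comm n m, ← mul_add_mod_mul_of_lt hHn, h, Nat.add_mul_mod_self_right]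
  have hrhs : (H * m + L) % (n * m) = (H % n + L / m) % n * m + L % m := by
    have h : H * m + L = (H % n + L / m) * m + L % m + H / n * (n * m) := by
      conv_lhs => rw [← Nat.div_add_mod L m, ← Nat.div_add_mod H n]
      ring
    rw [← mul_add_mod_mul_of_lt hLm, h, Nat.add_mul_mod_self_right]
  rw [hlhs, hrhs, swapDigits_mul_add hLm, mul_add_eq_mul_add_iff hHn (Nat.mod_lt _ hn),
    add_mod_eq_self_iff hLm hcarryH, eq_comm (a := H % n), add_mod_eq_self_iff hHn hcarryL,
    Nat.div_eq_zero_iff_lt hn, Nat.div_eq_zero_iff_lt hm]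

theorem swapDigits_add_add_mod_eq_iff {n m x y z : ℕ} (hn : 3 ≤ n) (hm : 3 ≤ m)
    (hx : x < n * m) (hy : y < n * m) (hz : z < n * m) :
    (swapDigits n m x + swapDigits n m y + swapDigits n m z) % (n * m) =
        swapDigits n m ((x + y + z) % (n * m)) ↔
      x / m + y / m + z / m < n ∧ x % m + y % m + z % m < m := by
  have hhigh {t : ℕ} (ht : t < n * m) : t / m < n := (Nat.div_lt_iff_lt_mul (by omega)).2 ht
  have hlow (t : ℕ) : t % m < m := Nat.mod_lt t (by omega)
  have hrot : swapDigits n m x + swapDigits n m y + swapDigits n m z =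
      (x % m + y % m + z % m) * n + (x / m + y / m + z / m) := by
    simp only [swapDigits]; ring
  have hsum : x + y + z = (x / m + y / m + z / m) * m + (x % m + y % m + z % m) := by
    conv_lhs => rw [← Nat.div_add_mod' x m, ← Nat.div_add_mod' y m, ← Nat.div_add_mod' z m]
    ring
  rw [hrot, hsum]
  exact mod_eq_swapDigits_mod_iff (by nlinarith [hhigh hx, hhigh hy, hhigh hz])
    (by nlinarith [hlow x, hlow y, hlow z])

end Nat

theorem Finset.card_filter_lt_add_one {α : Type*} [DecidableEq α] (s : Finset α) (f : α → ℕ)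
    (k : ℕ) : #{x ∈ s | f x < k + 1} = #{x ∈ s | f x < k} + #{x ∈ s | f x = k} := by
  rw [← card_union_of_disjoint (disjoint_filter.2 fun _ _ h₁ h₂ => by omega), ← filter_or]
  exact congrArg card (filter_congr fun _ _ => by omega)

theorem card_pairs_sum_eq {N s : ℕ} (hs : s < N) :
    #{p ∈ range N ×ˢ range N | p.1 + p.2 = s} = s + 1 := by
  have himage : {p ∈ range N ×ˢ range N | p.1 + p.2 = s} =
      (range (s + 1)).image fun a => (a, s - a) := by
    ext ⟨a, b⟩
    simp only [mem_filter, mem_product, mem_range, mem_image, Prod.mk.injEq]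
    constructor
    · rintro ⟨-, rfl⟩; exact ⟨a, by omega, rfl, by omega⟩
    · rintro ⟨a, ha, rfl, rfl⟩; omega
  rw [himage, card_image_of_injective _ fun _ _ h => congrArg Prod.fst h, card_range]

theorem card_pairs_sum_lt {N n : ℕ} (hn : n ≤ N) :
    #{p ∈ range N ×ˢ range N | p.1 + p.2 < n} = (n + 1).choose 2 := by
  induction n with
  | zero => simp
  | succ k ih =>
    rw [card_filter_lt_add_one, ih (by omega), card_pairs_sum_eq (by omega),
      Nat.choose_succ_succ' (k + 1) 1, Nat.choose_one_right, add_comm]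

theorem card_triples_sum_eq {N s : ℕ} (hs : s < N) :
    #{t ∈ range N ×ˢ range N ×ˢ range N | t.1 + t.2.1 + t.2.2 = s} = (s + 2).choose 2 := by
  set f : ℕ × ℕ → ℕ × ℕ × ℕ := fun p => (p.1, p.2, s - p.1 - p.2)
  have hf : f.Injective := by
    intro p q h
    simp only [f, Prod.mk.injEq] at h
    exact Prod.ext h.1 h.2.1
  have himage : {t ∈ range N ×ˢ range N ×ˢ range N | t.1 + t.2.1 + t.2.2 = s} =
      {p ∈ range N ×ˢ range N | p.1 + p.2 < s + 1}.image f := by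
    ext ⟨a, b, c⟩
    simp only [f, mem_filter, mem_product, mem_range, mem_image, Prod.exists, Prod.mk.injEq]
    constructor
    · rintro ⟨⟨ha, hb, -⟩, rfl⟩; exact ⟨a, b, ⟨⟨ha, hb⟩, by omega⟩, rfl, rfl, by omega⟩
    · rintro ⟨a, b, ⟨-, hab⟩, rfl, rfl, rfl⟩; omega
  rw [himage, card_image_of_injective _ hf, card_pairs_sum_lt (by omega)]

theorem card_triples_sum_lt {N n : ℕ} (hn : n ≤ N) :
    #{t ∈ range N ×ˢ range N ×ˢ range N | t.1 + t.2.1 + t.2.2 < n} = (n + 2).choose 3 := by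
  induction n with
  | zero => simp
  | succ k ih =>
    rw [card_filter_lt_add_one, ih (by omega), card_triples_sum_eq (by omega),
      Nat.choose_succ_succ' (k + 2) 2, add_comm]

theorem card_fin_triples_sum_lt (N : ℕ) :
    #{t : Fin N × Fin N × Fin N | (t.1 : ℕ) + t.2.1 + t.2.2 < N} = (N + 2).choose 3 := by
  rw [← card_triples_sum_lt (le_refl N)]
  apply card_nbij (fun t => ((t.1 : ℕ), (t.2.1 : ℕ), (t.2.2 : ℕ)))
  · intro t ht; simpa using ht
  · intro t _ t' _ h
    simp only [Prod.mk.injEq] at h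
    exact Prod.ext (Fin.ext h.1) (Prod.ext (Fin.ext h.2.1) (Fin.ext h.2.2))
  · rintro ⟨a, b, c⟩ h
    simp only [coe_filter, mem_product, mem_range, Set.mem_ofPred_eq] at h
    exact ⟨(⟨a, h.1.1⟩, ⟨b, h.1.2.1⟩, ⟨c, h.1.2.2⟩), by simpa using h.2, rfl⟩

namespace BitVec

theorem toNat_rotateLeft_of_lt {w r : ℕ} (hr : r < w) (x : BitVec w) :
    (x.rotateLeft r).toNat = Nat.swapDigits (2 ^ r) (2 ^ (w - r)) x.toNat := by
  have hw : 2 ^ w = 2 ^ (w - r) * 2 ^ r := (pow_sub_mul_pow 2 hr.le).symm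
  have hhigh : x.toNat / 2 ^ (w - r) < 2 ^ r :=
    (Nat.div_lt_iff_lt_mul (by positivity)).2 (mul_comm (2 ^ r) _ ▸ hw ▸ x.isLt)
  rw [toNat_rotateLeft, Nat.mod_eq_of_lt hr, Nat.shiftLeft_eq, Nat.shiftRight_eq_div_pow, hw,
    Nat.mul_mod_mul_right, mul_comm _ (2 ^ r), ← Nat.two_pow_add_eq_or_of_lt hhigh,
    Nat.swapDigits, mul_comm (2 ^ r)]

theorem rotateLeft_add_add_eq_iff {w r : ℕ} (hr : 2 ≤ r) (hrw : 2 ≤ w - r) (a b c : BitVec w) :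
    a.rotateLeft r + b.rotateLeft r + c.rotateLeft r = (a + b + c).rotateLeft r ↔
      a.toNat / 2 ^ (w - r) + b.toNat / 2 ^ (w - r) + c.toNat / 2 ^ (w - r) < 2 ^ r ∧
      a.toNat % 2 ^ (w - r) + b.toNat % 2 ^ (w - r) + c.toNat % 2 ^ (w - r) < 2 ^ (w - r) := by
  have hn : 2 ^ 2 ≤ 2 ^ r := Nat.pow_le_pow_right two_pos hr
  have hm : 2 ^ 2 ≤ 2 ^ (w - r) := Nat.pow_le_pow_right two_pos hrw
  have hw : 2 ^ w = 2 ^ r * 2 ^ (w - r) := (pow_mul_pow_sub 2 (by omega)).symm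
  rw [← toNat_inj]
  simp only [toNat_rotateLeft_of_lt (show r < w by omega), toNat_add, Nat.mod_add_mod, hw]
  exact Nat.swapDigits_add_add_mod_eq_iff (by omega) (by omega) (hw ▸ a.isLt) (hw ▸ b.isLt)
    (hw ▸ c.isLt)

def splitEquiv {w r : ℕ} (hr : r ≤ w) : BitVec w ≃ Fin (2 ^ r) × Fin (2 ^ (w - r)) :=
  equivFin.toEquiv.trans <| (finCongr (pow_mul_pow_sub 2 hr).symm).trans finProdFinEquiv.symm

theorem splitEquiv_fst {w r : ℕ} (hr : r ≤ w) (x : BitVec w) :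
    ((splitEquiv hr x).1 : ℕ) = x.toNat / 2 ^ (w - r) := rfl

theorem splitEquiv_snd {w r : ℕ} (hr : r ≤ w) (x : BitVec w) :
    ((splitEquiv hr x).2 : ℕ) = x.toNat % 2 ^ (w - r) := rfl

theorem card_rotateLeft_add_add_eq {w r : ℕ} (hr : 2 ≤ r) (hrw : 2 ≤ w - r) :
    #{p : BitVec w × BitVec w × BitVec w |
        p.1.rotateLeft r + p.2.1.rotateLeft r + p.2.2.rotateLeft r =
          (p.1 + p.2.1 + p.2.2).rotateLeft r} =
      (2 ^ r + 2).choose 3 * (2 ^ (w - r) + 2).choose 3 := by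
  let e := splitEquiv (r := r) (by omega : r ≤ w)
  let unzip {α β : Type} : (α × β) × (α × β) × (α × β) ≃ (α × α × α) × (β × β × β) :=
    ((Equiv.refl _).prodCongr (Equiv.prodProdProdComm _ _ _ _)).trans
      (Equiv.prodProdProdComm _ _ _ _)
  rw [← card_fin_triples_sum_lt, ← card_fin_triples_sum_lt, ← card_product, ← filter_product,
    univ_product_univ]
  refine card_equiv ((e.prodCongr (e.prodCongr e)).trans unzip) fun p => ?_
  simp [unzip, e, rotateLeft_add_add_eq_iff hr hrw, splitEquiv_fst, splitEquiv_snd]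

end BitVec

theorem rotational_probability_three_addends_middle_r_general
    (w : ℕ) (r : ℕ) (hr : 2 ≤ r) (hrw : r ≤ w - 2) :
    (Finset.univ.filter (fun p : BitVec w × BitVec w × BitVec w =>
        p.1.rotateLeft r + p.2.1.rotateLeft r + p.2.2.rotateLeft r =
          (p.1 + p.2.1 + p.2.2).rotateLeft r)).card =
      Nat.choose (2 ^ r + 2) (2 ^ r - 1) *
        Nat.choose (2 ^ (w - r) + 2) (2 ^ (w - r) - 1) ∧
    ((Finset.univ.filter (fun p : BitVec w × BitVec w × BitVec w =>
        p.1.rotateLeft r + p.2.1.rotateLeft r + p.2.2.rotateLeft r =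
          (p.1 + p.2.1 + p.2.2).rotateLeft r)).card : ℚ) / 2 ^ (3 * w)
      = (Nat.choose (2 ^ r + 2) (2 ^ r - 1) *
          Nat.choose (2 ^ (w - r) + 2) (2 ^ (w - r) - 1) : ℚ) / 2 ^ (3 * w) := by
  have hsymm (k : ℕ) : (2 ^ k + 2).choose 3 = (2 ^ k + 2).choose (2 ^ k - 1) :=
    Nat.choose_symm_of_eq_add (by have := k.one_le_two_pow; omega)
  have hcount := BitVec.card_rotateLeft_add_add_eq hr (by omega : 2 ≤ w - r)
  rw [hsymm, hsymm] at hcount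
  exact ⟨hcount, by rw [hcount, Nat.cast_mul]⟩

theorem rotational_probability_three_addends_middle_r
    (w : ℕ) (hw : 4 ≤ w) (r : ℕ) (hr : 2 ≤ r) (hrw : r ≤ w - 2) :
    (Finset.univ.filter (fun p : BitVec w × BitVec w × BitVec w =>
        p.1.rotateLeft r + p.2.1.rotateLeft r + p.2.2.rotateLeft r =
          (p.1 + p.2.1 + p.2.2).rotateLeft r)).card =
      Nat.choose (2 ^ r + 2) (2 ^ r - 1) *
        Nat.choose (2 ^ (w - r) + 2) (2 ^ (w - r) - 1) ∧
    ((Finset.univ.filter (fun p : BitVec w × BitVec w × BitVec w =>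
        p.1.rotateLeft r + p.2.1.rotateLeft r + p.2.2.rotateLeft r =
          (p.1 + p.2.1 + p.2.2).rotateLeft r)).card : ℚ) / 2 ^ (3 * w)
      = (Nat.choose (2 ^ r + 2) (2 ^ r - 1) *
          Nat.choose (2 ^ (w - r) + 2) (2 ^ (w - r) - 1) : ℚ) / 2 ^ (3 * w) :=
  rotational_probability_three_addends_middle_r_general w r hr hrw
end

section
/- Let w ≥ 2 and let r = 1 or r = w−1. The number N of triples (a, b, c) of w-bit words such that (a ⋘ r) ⊞ (b ⋘ r) ⊞ (c ⋘ r) = (a ⊞ b ⊞ c) ⋘ r equals 4 · ( C(2^(w−1) + 2, 2^(w−1) − 1) + C(2^(w−1), 2^(w−1) − 3) ), and moreover satisfies 3·N = 2^(w+2) · (2^(2w−3) + 1); equivalently, for independent uniformly distributed a, b, c, the probability of the equality is 4(2^(2w−3) + 1)/(3 · 2^(2w)). -/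
/-- Binomial coefficient on integers, equal to `0` when the lower argument is
negative. -/
def intChoose (n m : ℤ) : ℤ :=
  if 0 ≤ m then ((n.toNat).choose m.toNat : ℤ) else 0

/-!
Write a word as `x = h * 2 ^ (w - r) + l`; rotation by `r` swaps the two digits `h` and `l`.
If `A` and `B` are the sums of the high and of the low digits of `a, b, c`, the sum of the
rotations and the rotation of the sum agree exactly when the carry `A / 2 ^ r` out of the high
halves is divisible by `2 ^ (w - r)` and the carry `B / 2 ^ (w - r)` out of the low halves is
divisible by `2 ^ r`. So the count factors over high and low digits, symmetrically in
`r ↔ w - r`. For `r = 1` the high digits are bits that must not carry (4 triples), and the low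
digits lie in `[0, K)`, `K = 2 ^ (w - 1)`, with sum below `K` or at least `2 K`: there are
`C(K + 2, 3)` triples of the first kind by stars and bars, and `C(K, 3)` of the second by the
reflection `l ↦ K - 1 - l`.
-/

open Finset

namespace Nat

theorem mul_add_mod_mul_of_lt_s7 {m n q s : ℕ} (hs : s < n) :
    (q * n + s) % (m * n) = q % m * n + s := by
  rw [Nat.mul_comm m n, Nat.mod_mul, Nat.mul_add_mod_of_lt hs, Nat.mul_comm q n,
    Nat.mul_add_div (by omega), Nat.div_eq_of_lt hs, Nat.add_zero, Nat.mul_comm n, Nat.add_comm]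

theorem mul_add_eq_mul_add_iff_s7 {n q q' s s' : ℕ} (hs : s < n) (hs' : s' < n) :
    q * n + s = q' * n + s' ↔ q = q' ∧ s = s' := by
  refine ⟨fun h => ?_, fun ⟨hq, hs⟩ => hq ▸ hs ▸ rfl⟩
  have hn : 0 < n := by omega
  have hdiv := congrArg (· / n) h
  have hmod := congrArg (· % n) h
  simp only [Nat.mul_comm _ n, Nat.mul_add_div hn, Nat.div_eq_of_lt hs, Nat.div_eq_of_lt hs',
    Nat.mod_eq_of_lt hs, Nat.mod_eq_of_lt hs', Nat.mul_add_mod] at hdiv hmod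
  exact ⟨by simpa using hdiv, hmod⟩

end Nat

def swapDigits (m n x : ℕ) : ℕ := x % m * n + x / m

theorem add_mod_eq_swapDigits_iff {m n : ℕ} (hm : 0 < m) (hn : 0 < n) (A B : ℕ) :
    (B * n + A) % (m * n) = swapDigits m n ((A * m + B) % (m * n)) ↔ m ∣ A / n ∧ n ∣ B / m := by
  have hlhs : (B * n + A) % (m * n) = (B + A / n) % m * n + A % n := by
    rw [← Nat.mul_add_mod_mul_of_lt_s7 (Nat.mod_lt A hn)]
    congr 1
    rw [Nat.add_mul, Nat.add_assoc, Nat.div_add_mod']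
  have hrhs : swapDigits m n ((A * m + B) % (m * n)) = B % m * n + (A + B / m) % n := by
    have : (A * m + B) % (m * n) = (A + B / m) % n * m + B % m := by
      rw [Nat.mul_comm m n, ← Nat.mul_add_mod_mul_of_lt_s7 (Nat.mod_lt B hm)]
      congr 1
      rw [Nat.add_mul, Nat.add_assoc, Nat.div_add_mod']
    rw [swapDigits, this, Nat.mul_add_mod_of_lt (Nat.mod_lt B hm), Nat.mul_comm _ m,
      Nat.mul_add_div hm, Nat.div_eq_of_lt (Nat.mod_lt B hm), Nat.add_zero]
  rw [hlhs, hrhs, Nat.mul_add_eq_mul_add_iff_s7 (Nat.mod_lt A hn) (Nat.mod_lt _ hn),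
    eq_comm (a := A % n)]
  exact and_congr Nat.add_modEq_left_iff Nat.add_modEq_left_iff

theorem BitVec.toNat_rotateLeft_of_lt_s7 {w r : ℕ} (hr : r < w) (x : BitVec w) :
    (x.rotateLeft r).toNat = swapDigits (2 ^ (w - r)) (2 ^ r) x.toNat := by
  have h2w : 2 ^ w = 2 ^ (w - r) * 2 ^ r := by rw [← pow_add, Nat.sub_add_cancel hr.le]
  have hhi : x.toNat / 2 ^ (w - r) < 2 ^ r :=
    Nat.div_lt_of_lt_mul (h2w ▸ x.isLt)
  rw [BitVec.rotateLeft_eq_rotateLeftAux_of_lt hr, BitVec.rotateLeftAux, BitVec.toNat_or,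
    BitVec.toNat_shiftLeft, BitVec.toNat_ushiftRight, Nat.shiftLeft_eq, Nat.shiftRight_eq_div_pow,
    h2w, Nat.mul_mod_mul_right, mul_comm (x.toNat % _), swapDigits, mul_comm (x.toNat % _)]
  exact (Nat.two_pow_add_eq_or_of_lt hhi _).symm

theorem BitVec.rotateLeft_add_rotateLeft_add_rotateLeft_eq_iff {w r : ℕ} (hr : r < w)
    (a b c : BitVec w) :
    a.rotateLeft r + b.rotateLeft r + c.rotateLeft r = (a + b + c).rotateLeft r ↔
      2 ^ (w - r) ∣
          (a.toNat / 2 ^ (w - r) + b.toNat / 2 ^ (w - r) + c.toNat / 2 ^ (w - r)) / 2 ^ r ∧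
        2 ^ r ∣
          (a.toNat % 2 ^ (w - r) + b.toNat % 2 ^ (w - r) + c.toNat % 2 ^ (w - r)) /
            2 ^ (w - r) := by
  have h2w : 2 ^ w = 2 ^ (w - r) * 2 ^ r := by rw [← pow_add, Nat.sub_add_cancel hr.le]
  have hsum : a.toNat + b.toNat + c.toNat =
      (a.toNat / 2 ^ (w - r) + b.toNat / 2 ^ (w - r) + c.toNat / 2 ^ (w - r)) * 2 ^ (w - r) +
        (a.toNat % 2 ^ (w - r) + b.toNat % 2 ^ (w - r) + c.toNat % 2 ^ (w - r)) := by
    linarith [Nat.div_add_mod' a.toNat (2 ^ (w - r)), Nat.div_add_mod' b.toNat (2 ^ (w - r)),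
      Nat.div_add_mod' c.toNat (2 ^ (w - r))]
  rw [BitVec.toNat_eq]
  simp only [BitVec.toNat_add, BitVec.toNat_rotateLeft_of_lt_s7 hr, Nat.mod_add_mod]
  rw [h2w, hsum, ← add_mod_eq_swapDigits_iff (by positivity) (by positivity)]
  simp only [swapDigits]
  ring_nf

def cube (t : ℕ) : Finset (ℕ × ℕ × ℕ) := range t ×ˢ range t ×ˢ range t

theorem card_filter_bitVec_triple (w : ℕ) (P : ℕ × ℕ × ℕ → Prop) [DecidablePred P] :
    #{p : BitVec w × BitVec w × BitVec w | P (p.1.toNat, p.2.1.toNat, p.2.2.toNat)} =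
      #{x ∈ cube (2 ^ w) | P x} := by
  apply card_nbij' (fun p => (p.1.toNat, p.2.1.toNat, p.2.2.toNat))
    (fun x => (BitVec.ofNat w x.1, BitVec.ofNat w x.2.1, BitVec.ofNat w x.2.2))
  · intro p hp
    simp_all [cube, BitVec.isLt]
  · intro x hx
    simp_all [cube, Nat.mod_eq_of_lt]
  · intro p _
    simp
  · intro x hx
    simp_all [cube, Nat.mod_eq_of_lt]

theorem card_filter_cube_mul (m n : ℕ) (P Q : ℕ × ℕ × ℕ → Prop) [DecidablePred P]
    [DecidablePred Q] :
    #{x ∈ cube (n * m) | P (x.1 / m, x.2.1 / m, x.2.2 / m) ∧ Q (x.1 % m, x.2.1 % m, x.2.2 % m)} =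
      #{h ∈ cube n | P h} * #{l ∈ cube m | Q l} := by
  rcases Nat.eq_zero_or_pos m with rfl | hm
  · simp [cube]
  have hlt : ∀ {h l : ℕ}, h < n → l < m → h * m + l < n * m := fun hh hl => by nlinarith
  have hdiv : ∀ {h l : ℕ}, l < m → (h * m + l) / m = h := fun hl => by
    rw [Nat.mul_comm, Nat.mul_add_div hm, Nat.div_eq_of_lt hl, Nat.add_zero]
  have hmod : ∀ {h l : ℕ}, l < m → (h * m + l) % m = l := Nat.mul_add_mod_of_lt
  rw [← card_product]
  apply card_nbij' (fun x => ((x.1 / m, x.2.1 / m, x.2.2 / m), (x.1 % m, x.2.1 % m, x.2.2 % m)))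
    (fun y => (y.1.1 * m + y.2.1, y.1.2.1 * m + y.2.2.1, y.1.2.2 * m + y.2.2.2))
  · intro x hx
    simp_all [cube, Nat.div_lt_iff_lt_mul hm, Nat.mod_lt _ hm]
  · rintro ⟨⟨h₁, h₂, h₃⟩, l₁, l₂, l₃⟩ hy
    obtain ⟨⟨⟨hh₁, hh₂, hh₃⟩, hP⟩, ⟨hl₁, hl₂, hl₃⟩, hQ⟩ := by simpa [cube] using hy
    simp [cube, *]
  · intro x _
    simp [Nat.div_add_mod']
  · rintro ⟨⟨h₁, h₂, h₃⟩, l₁, l₂, l₃⟩ hy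
    obtain ⟨⟨⟨hh₁, hh₂, hh₃⟩, -⟩, ⟨hl₁, hl₂, hl₃⟩, -⟩ := by simpa [cube] using hy
    simp [*]

theorem card_filter_pair_sum_lt (t : ℕ) :
    #{q ∈ range t ×ˢ range t | q.1 + q.2 < t} = (t + 1).choose 2 := by
  induction t with
  | zero => rfl
  | succ t ih =>
    rw [← card_filter_add_card_filter_not (fun q => q.1 = 0), filter_filter, filter_filter]
    have hzero : #{q ∈ range (t + 1) ×ˢ range (t + 1) | q.1 + q.2 < t + 1 ∧ q.1 = 0} = t + 1 := by
      refine Eq.trans ?_ (card_range (t + 1))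
      apply card_nbij' (·.2) (fun y => (0, y)) <;> intro q hq <;>
        simp only [coe_filter, mem_product, mem_range, Set.mem_ofPred_eq, coe_range, Set.mem_Iio,
          and_true] at hq ⊢
      · omega
      · omega
      · exact Prod.ext (by omega) rfl
    have hpos : #{q ∈ range (t + 1) ×ˢ range (t + 1) | q.1 + q.2 < t + 1 ∧ ¬q.1 = 0} =
        (t + 1).choose 2 := by
      rw [← ih]
      apply card_nbij' (fun q => (q.1 - 1, q.2)) (fun q => (q.1 + 1, q.2)) <;> intro q hq <;>
        simp only [coe_filter, mem_product, mem_range, Set.mem_ofPred_eq] at hq ⊢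
      · omega
      · omega
      · exact Prod.ext (by omega) rfl
      · simp
    rw [hzero, hpos, show (t + 1 + 1).choose 2 = (t + 1).choose 1 + (t + 1).choose 2 from
      Nat.choose_succ_succ' _ _, Nat.choose_one_right, Nat.add_comm]

theorem card_cube_filter_sum_lt (t : ℕ) :
    #{x ∈ cube t | x.1 + x.2.1 + x.2.2 < t} = (t + 2).choose 3 := by
  induction t with
  | zero => rfl
  | succ t ih =>
    rw [← card_filter_add_card_filter_not (fun x => x.1 = 0), filter_filter, filter_filter]
    have hzero : #{x ∈ cube (t + 1) | x.1 + x.2.1 + x.2.2 < t + 1 ∧ x.1 = 0} =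
        (t + 2).choose 2 := by
      rw [← card_filter_pair_sum_lt (t + 1)]
      apply card_nbij' (·.2) (fun y => (0, y)) <;> intro q hq <;>
        simp only [cube, coe_filter, mem_product, mem_range, Set.mem_ofPred_eq, and_true] at hq ⊢
      · omega
      · omega
      · exact Prod.ext (by omega) rfl
    have hpos : #{x ∈ cube (t + 1) | x.1 + x.2.1 + x.2.2 < t + 1 ∧ ¬x.1 = 0} =
        (t + 2).choose 3 := by
      rw [← ih]
      apply card_nbij' (fun x => (x.1 - 1, x.2)) (fun x => (x.1 + 1, x.2)) <;> intro q hq <;>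
        simp only [cube, coe_filter, mem_product, mem_range, Set.mem_ofPred_eq] at hq ⊢
      · omega
      · omega
      · exact Prod.ext (by omega) rfl
      · simp
    rw [hzero, hpos, Nat.choose_succ_succ (t + 2), Nat.add_comm]

theorem card_cube_filter_two_mul_le_sum (t : ℕ) :
    #{x ∈ cube t | 2 * t ≤ x.1 + x.2.1 + x.2.2} = t.choose 3 := by
  have hchoose : t.choose 3 = (t - 2 + 2).choose 3 := by
    rcases le_or_gt 2 t with h | h
    · rw [Nat.sub_add_cancel h]
    · interval_cases t <;> rfl
  rw [hchoose, ← card_cube_filter_sum_lt]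
  apply card_nbij' (fun x => (t - 1 - x.1, t - 1 - x.2.1, t - 1 - x.2.2))
    (fun x => (t - 1 - x.1, t - 1 - x.2.1, t - 1 - x.2.2)) <;> intro x hx <;>
    simp only [cube, coe_filter, mem_product, mem_range, Set.mem_ofPred_eq] at hx ⊢
  · omega
  · omega
  · ext <;> simp <;> omega
  · ext <;> simp <;> omega

def carryDvdCount (m n : ℕ) : ℕ := #{h ∈ cube n | m ∣ (h.1 + h.2.1 + h.2.2) / n}

theorem card_rotateLeft_add_rotateLeft_add_rotateLeft_eq {w r : ℕ} (hr : r < w) :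
    #{p : BitVec w × BitVec w × BitVec w |
        p.1.rotateLeft r + p.2.1.rotateLeft r + p.2.2.rotateLeft r =
          (p.1 + p.2.1 + p.2.2).rotateLeft r} =
      carryDvdCount (2 ^ (w - r)) (2 ^ r) * carryDvdCount (2 ^ r) (2 ^ (w - r)) := by
  simp_rw [BitVec.rotateLeft_add_rotateLeft_add_rotateLeft_eq_iff hr]
  set m := 2 ^ (w - r)
  set n := 2 ^ r
  rw [card_filter_bitVec_triple w (fun x : ℕ × ℕ × ℕ =>
      m ∣ (x.1 / m + x.2.1 / m + x.2.2 / m) / n ∧ n ∣ (x.1 % m + x.2.1 % m + x.2.2 % m) / m),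
    ← pow_mul_pow_sub 2 hr.le]
  exact card_filter_cube_mul m n (fun h => m ∣ (h.1 + h.2.1 + h.2.2) / n)
    (fun l => n ∣ (l.1 + l.2.1 + l.2.2) / m)

theorem carryDvdCount_two_right {m : ℕ} (hm : 2 ≤ m) : carryDvdCount m 2 = 4 := by
  have hcarry : ∀ h ∈ cube 2, m ∣ (h.1 + h.2.1 + h.2.2) / 2 ↔ h.1 + h.2.1 + h.2.2 ≤ 1 := by
    intro h hh
    simp only [cube, mem_product, mem_range] at hh
    rw [Nat.dvd_iff_mod_eq_zero, Nat.mod_eq_of_lt (by omega)]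
    omega
  rw [carryDvdCount, filter_congr hcarry]
  rfl

theorem carryDvdCount_two_left (K : ℕ) : carryDvdCount 2 K = (K + 2).choose 3 + K.choose 3 := by
  have hcarry : ∀ l ∈ cube K, 2 ∣ (l.1 + l.2.1 + l.2.2) / K ↔
      l.1 + l.2.1 + l.2.2 < K ∨ 2 * K ≤ l.1 + l.2.1 + l.2.2 := by
    intro l hl
    simp only [cube, mem_product, mem_range] at hl
    have hK : 0 < K := by omega
    have h3 : (l.1 + l.2.1 + l.2.2) / K < 3 := Nat.div_lt_of_lt_mul (by omega)
    rw [← Nat.div_eq_zero_iff_lt hK, ← Nat.le_div_iff_mul_le hK]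
    generalize (l.1 + l.2.1 + l.2.2) / K = q at h3 ⊢
    omega
  rw [carryDvdCount, filter_congr hcarry, filter_or, card_union_of_disjoint,
    card_cube_filter_sum_lt, card_cube_filter_two_mul_le_sum]
  exact disjoint_filter.2 fun _ _ h => by omega

theorem Nat.three_mul_choose_three_add_two_add_choose_three (K : ℕ) :
    3 * ((K + 2).choose 3 + K.choose 3) = K ^ 3 + 2 * K := by
  rcases K with _ | _ | k
  · rfl
  · rfl
  have h₁ := Nat.descFactorial_eq_factorial_mul_choose (k + 4) 3
  have h₂ := Nat.descFactorial_eq_factorial_mul_choose (k + 2) 3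
  simp only [Nat.descFactorial, Nat.factorial, Nat.add_one_sub_one, Nat.add_sub_cancel,
    Nat.sub_zero, Nat.mul_one, Nat.reduceSubDiff, Nat.reduceAdd, Nat.reduceMul, Nat.zero_add,
    Nat.succ_eq_add_one] at h₁ h₂
  nlinarith

theorem intChoose_natCast_sub_natCast (n k : ℕ) : intChoose n (n - k) = n.choose k := by
  rcases le_or_gt k n with h | h
  · rw [intChoose, if_pos (by omega), Int.toNat_natCast, ← Nat.cast_sub h, Int.toNat_natCast,
      Nat.choose_symm h]
  · rw [intChoose, if_neg (by omega), Nat.choose_eq_zero_of_lt h, Nat.cast_zero]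

theorem card_rotateLeft_add_rotateLeft_add_rotateLeft_eq_of_eq_one_or_eq_sub_one {w r : ℕ}
    (hw : 2 ≤ w) (hr : r = 1 ∨ r = w - 1) :
    #{p : BitVec w × BitVec w × BitVec w |
        p.1.rotateLeft r + p.2.1.rotateLeft r + p.2.2.rotateLeft r =
          (p.1 + p.2.1 + p.2.2).rotateLeft r} =
      4 * ((2 ^ (w - 1) + 2).choose 3 + (2 ^ (w - 1)).choose 3) := by
  have hK : 2 ≤ 2 ^ (w - 1) := Nat.le_self_pow (by omega) 2
  rcases hr with rfl | rfl
  · rw [card_rotateLeft_add_rotateLeft_add_rotateLeft_eq (by omega), pow_one,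
      carryDvdCount_two_right hK, carryDvdCount_two_left]
  · rw [card_rotateLeft_add_rotateLeft_add_rotateLeft_eq (by omega), Nat.sub_sub_self (by omega),
      pow_one, carryDvdCount_two_right hK, carryDvdCount_two_left, Nat.mul_comm]

theorem rotational_probability_three_addends_extreme_r
    (w : ℕ) (hw : 2 ≤ w) (r : ℕ) (hr : r = 1 ∨ r = w - 1)
    (N : ℕ)
    (hN : N = (Finset.univ.filter (fun p : BitVec w × BitVec w × BitVec w =>
        p.1.rotateLeft r + p.2.1.rotateLeft r + p.2.2.rotateLeft r =
          (p.1 + p.2.1 + p.2.2).rotateLeft r)).card) :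
    (N : ℤ) = 4 * (intChoose (2 ^ (w - 1) + 2) (2 ^ (w - 1) - 1) +
        intChoose (2 ^ (w - 1)) ((2 : ℤ) ^ (w - 1) - 3)) ∧
    3 * (N : ℤ) = 2 ^ (w + 2) * (2 ^ (2 * w - 3) + 1) ∧
    (N : ℚ) / 2 ^ (3 * w) = 4 * ((2 : ℚ) ^ (2 * w - 3) + 1) / (3 * 2 ^ (2 * w)) := by
  rw [card_rotateLeft_add_rotateLeft_add_rotateLeft_eq_of_eq_one_or_eq_sub_one hw hr] at hN
  have h3N : 3 * N = 2 ^ (w + 2) * (2 ^ (2 * w - 3) + 1) := by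
    rw [hN, Nat.mul_left_comm, Nat.three_mul_choose_three_add_two_add_choose_three]
    obtain ⟨v, rfl⟩ := Nat.exists_eq_add_of_le' hw
    rw [show v + 2 - 1 = v + 1 by omega, show 2 * (v + 2) - 3 = 2 * v + 1 by omega]
    ring
  refine ⟨?_, by exact_mod_cast h3N, ?_⟩
  · rw [show (2 : ℤ) ^ (w - 1) = ((2 ^ (w - 1) : ℕ) : ℤ) by push_cast; rfl, hN]
    generalize 2 ^ (w - 1) = K
    rw [show (K : ℤ) - 1 = ((K + 2 : ℕ) : ℤ) - (3 : ℕ) by push_cast; ring,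
      show (K : ℤ) + 2 = ((K + 2 : ℕ) : ℤ) by push_cast; ring,
      show (K : ℤ) - 3 = (K : ℤ) - (3 : ℕ) by norm_num,
      intChoose_natCast_sub_natCast, intChoose_natCast_sub_natCast]
    push_cast
    ring
  · have hq : (3 : ℚ) * N = 2 ^ (w + 2) * (2 ^ (2 * w - 3) + 1) := by exact_mod_cast h3N
    rw [div_eq_div_iff (by positivity) (by positivity)]
    linear_combination (2 ^ (2 * w) : ℚ) * hq
end

section
/- Let w ≥ 2 and define, for 1 ≤ q ≤ w−1, F(q, 3, w) = Σ_{h=0}^{⌊3(2^q − 1)/2^w⌋} Σ_{j=0}^{3} (−1)^j C(3, j) [ C(h·2^w − (j−1)·2^q − 1 + 3, h·2^w − (j−1)·2^q − 1) − C(h·2^w − j·2^q − 1 + 3, h·2^w − j·2^q − 1) ], where binomial coefficients with negative lower argument are 0. Then F(1, 3, w) = 4 and F(w−1, 3, w) = C(2^(w−1) + 2, 2^(w−1) − 1) + C(2^(w−1), 2^(w−1) − 3), while for 2 ≤ q ≤ w−2 one has F(q, 3, w) = C(2^q + 2, 2^q − 1). -/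
/-- The counting function `F(q, k, w)` from Proposition 2, here for `k = 3`. -/
def Fcount (q k w : ℕ) : ℤ :=
  ∑ h ∈ Finset.range (k * (2 ^ q - 1) / 2 ^ w + 1),
    ∑ j ∈ Finset.range (k + 1),
      (-1 : ℤ) ^ j * (k.choose j : ℤ) *
        (intChoose ((h : ℤ) * 2 ^ w - ((j : ℤ) - 1) * 2 ^ q - 1 + k)
            ((h : ℤ) * 2 ^ w - ((j : ℤ) - 1) * 2 ^ q - 1) -
         intChoose ((h : ℤ) * 2 ^ w - (j : ℤ) * 2 ^ q - 1 + k)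
            ((h : ℤ) * 2 ^ w - (j : ℤ) * 2 ^ q - 1))

lemma intChoose_of_neg (n : ℤ) {m : ℤ} (hm : m < 0) : intChoose n m = 0 :=
  if_neg hm.not_ge

lemma six_mul_intChoose_add_three {m : ℤ} (hm : 0 ≤ m) :
    6 * intChoose (m + 3) m = (m + 1) * (m + 2) * (m + 3) := by
  lift m to ℕ using hm
  have key : 6 * (m + 3).choose m = (m + 3) * (m + 2) * (m + 1) := by
    rw [Nat.choose_symm_add, show 6 = Nat.factorial 3 from rfl,
      ← Nat.descFactorial_eq_factorial_mul_choose]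
    simp only [Nat.succ_descFactorial_succ, Nat.descFactorial_zero]
    ring
  rw [intChoose, if_pos (Int.natCast_nonneg m), show ((m : ℤ) + 3).toNat = m + 3 by omega,
    Int.toNat_natCast]
  linear_combination (norm := (push_cast; ring)) congrArg (Nat.cast : ℕ → ℤ) key

lemma intChoose_third_difference {a : ℤ} (ha : 3 ≤ a) :
    intChoose (3 * a + 2) (3 * a - 1) - 4 * intChoose (2 * a + 2) (2 * a - 1) +
      6 * intChoose (a + 2) (a - 1) = intChoose a (a - 3) := by
  have e3 := six_mul_intChoose_add_three (m := 3 * a - 1) (by linarith)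
  have e2 := six_mul_intChoose_add_three (m := 2 * a - 1) (by linarith)
  have e1 := six_mul_intChoose_add_three (m := a - 1) (by linarith)
  have e0 := six_mul_intChoose_add_three (m := a - 3) (by linarith)
  refine mul_left_cancel₀ (by norm_num : (6 : ℤ) ≠ 0) ?_
  ring_nf at e3 e2 e1 e0 ⊢
  linear_combination e3 - 4 * e2 + 6 * e1 - e0

lemma Fcount_of_lt {q w : ℕ} (h : 3 * (2 ^ q - 1) < 2 ^ w) :
    Fcount q 3 w = intChoose (2 ^ q + 2) (2 ^ q - 1) := by
  have ha : (1 : ℤ) ≤ 2 ^ q := one_le_pow₀ (by norm_num)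
  rw [Fcount, Nat.div_eq_of_lt h]
  simp (disch := grind) [Finset.sum_range_succ, intChoose_of_neg]
  ring_nf

lemma Fcount_pred {n : ℕ} (hn : 2 ≤ n) :
    Fcount n 3 (n + 1) = intChoose (2 ^ n + 2) (2 ^ n - 1) + intChoose (2 ^ n) (2 ^ n - 3) := by
  have ha : (4 : ℤ) ≤ 2 ^ n := by
    calc (4 : ℤ) = 2 ^ 2 := by norm_num
      _ ≤ 2 ^ n := pow_le_pow_right₀ (by norm_num) hn
  have hfloor : 3 * (2 ^ n - 1) / 2 ^ (n + 1) = 1 := by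
    have : 4 ≤ 2 ^ n := by exact_mod_cast ha
    rw [pow_succ]; apply Nat.div_eq_of_lt_le <;> omega
  rw [Fcount, hfloor]
  simp (disch := grind) [Finset.sum_range_succ, intChoose_of_neg, pow_succ]
  linear_combination (norm := ring_nf) intChoose_third_difference (a := 2 ^ n) (by linarith)

theorem Fcount_three_values (w : ℕ) (hw : 2 ≤ w) :
    Fcount 1 3 w = 4 ∧
    Fcount (w - 1) 3 w =
      intChoose (2 ^ (w - 1) + 2) (2 ^ (w - 1) - 1) +
        intChoose (2 ^ (w - 1)) ((2 : ℤ) ^ (w - 1) - 3) ∧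
    ∀ q : ℕ, 2 ≤ q → q ≤ w - 2 →
      Fcount q 3 w = intChoose (2 ^ q + 2) ((2 : ℤ) ^ q - 1) := by
  have h_one : ∀ v, 2 ≤ v → Fcount 1 3 v = 4 := fun v hv => by
    have : 2 ^ 2 ≤ 2 ^ v := Nat.pow_le_pow_right two_pos hv
    rw [Fcount_of_lt (by omega)]
    rfl
  refine ⟨h_one w hw, ?_, fun q _ hqw => Fcount_of_lt ?_⟩
  · obtain ⟨n, rfl⟩ : ∃ n, w = n + 1 := ⟨w - 1, by omega⟩
    rw [Nat.add_sub_cancel]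
    obtain rfl | hn := (show 1 ≤ n by omega).eq_or_lt
    · rw [h_one 2 le_rfl]
      rfl
    · exact Fcount_pred hn
  · have : 2 ^ q * 2 ^ 2 ≤ 2 ^ w := by
      rw [← pow_add]; exact Nat.pow_le_pow_right two_pos (by omega)
    have : 1 ≤ 2 ^ q := Nat.one_le_two_pow
    omega
end
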